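/- In a functional pure type system, if Γ ⊢ M : A and Γ ⊢ M : B then A and B are β-convertible. -/

import Mathlib

/-- Terms of a generic λ-calculus with sorts `S` and constants `C` (de Bruijn indices). -/
inductive Tm (S : Type) (C : Type) : Type
  | sort : S → Tm S C
  | const : C → Tm S C
  | var : Nat → Tm S C
  | app : Tm S C → Tm S C → Tm S C
  | lam : Tm S C → Tm S C → Tm S C
  | pi : Tm S C → Tm S C → Tm S C

namespace Tm
variable {S C : Type}

/-- Lifting of de Bruijn indices ≥ k by d. -/
def lift (d k : Nat) : Tm S C → Tm S C
  | sort s => sort s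
  | const c => const c
  | var i => if i < k then var i else var (i + d)
  | app m n => app (m.lift d k) (n.lift d k)
  | lam a m => lam (a.lift d k) (m.lift d (k+1))
  | pi a b => pi (a.lift d k) (b.lift d (k+1))

/-- Substitution of variable k by N. -/
def subst (k : Nat) (N : Tm S C) : Tm S C → Tm S C
  | sort s => sort s
  | const c => const c
  | var i => if i < k then var i else if i = k then N.lift k 0 else var (i-1)
  | app m n => app (subst k N m) (subst k N n)
  | lam a m => lam (subst k N a) (subst (k+1) N m)
  | pi a b => pi (subst k N a) (subst (k+1) N b)

/-- Lifting a simultaneous substitution under a binder. -/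
def upσ (σ : Nat → Tm S C) : Nat → Tm S C
  | 0 => var 0
  | i+1 => (σ i).lift 1 0

/-- Simultaneous substitution. -/
def msubst (σ : Nat → Tm S C) : Tm S C → Tm S C
  | sort s => sort s
  | const c => const c
  | var i => σ i
  | app m n => app (m.msubst σ) (n.msubst σ)
  | lam a m => lam (a.msubst σ) (m.msubst (upσ σ))
  | pi a b => pi (a.msubst σ) (b.msubst (upσ σ))

end Tm

/-- A rewrite rule [Δ] l ↝ r. -/
abbrev Rule (S C : Type) := List (Tm S C) × Tm S C × Tm S C

/-- One-step βR-reduction (contextual closure of β together with rules of R). -/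
inductive Step {S C : Type} (R : Rule S C → Prop) : Tm S C → Tm S C → Prop
  | beta {A M N} : Step R (.app (.lam A M) N) (Tm.subst 0 N M)
  | rew {Δ l r} (σ : Nat → Tm S C) : R (Δ, l, r) → Step R (l.msubst σ) (r.msubst σ)
  | appL {M M' N} : Step R M M' → Step R (.app M N) (.app M' N)
  | appR {M N N'} : Step R N N' → Step R (.app M N) (.app M N')
  | lamA {A A' M} : Step R A A' → Step R (.lam A M) (.lam A' M)
  | lamM {A M M'} : Step R M M' → Step R (.lam A M) (.lam A M')
  | piA {A A' B} : Step R A A' → Step R (.pi A B) (.pi A' B)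
  | piB {A B B'} : Step R B B' → Step R (.pi A B) (.pi A B')

/-- The empty rewrite system: pure β-reduction. -/
def NoRules {S C : Type} : Rule S C → Prop := fun _ => False

/-- Multistep reduction. -/
abbrev Red {S C : Type} (R : Rule S C → Prop) : Tm S C → Tm S C → Prop :=
  Relation.ReflTransGen (Step R)

/-- Conversion: smallest congruence containing the reduction. -/
abbrev Conv {S C : Type} (R : Rule S C → Prop) : Tm S C → Tm S C → Prop :=
  Relation.EqvGen (Step R)

/-- Pure β-reduction and conversion. -/
abbrev BetaRed {S C : Type} : Tm S C → Tm S C → Prop := Red NoRules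
abbrev BetaConv {S C : Type} : Tm S C → Tm S C → Prop := Conv NoRules

/-- Confluence of a relation. -/
def Confluent {X : Type} (r : X → X → Prop) : Prop :=
  ∀ a b c, Relation.ReflTransGen r a b → Relation.ReflTransGen r a c →
    ∃ d, Relation.ReflTransGen r b d ∧ Relation.ReflTransGen r c d

/-- A PTS specification: a set of sorts, axioms and rules. -/
structure Spec (S : Type) where
  sorts : Set S
  ax : S → S → Prop
  ru : S → S → S → Prop

/-- Functional specifications. -/
def Spec.Functional {S : Type} (sp : Spec S) : Prop :=
  (∀ s₁ s₂ s₂', sp.ax s₁ s₂ → sp.ax s₁ s₂' → s₂ = s₂') ∧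
  (∀ s₁ s₂ s₃ s₃', sp.ru s₁ s₂ s₃ → sp.ru s₁ s₂ s₃' → s₃ = s₃')

/-- Top-sorts: sorts with no axiom. -/
def Spec.TopSort {S : Type} (sp : Spec S) (s : S) : Prop :=
  s ∈ sp.sorts ∧ ¬ ∃ s', sp.ax s s'

mutual
/-- Well-formed contexts (generic typing, parametrized by a spec, a constant
signature with a validity predicate, and a rewrite system used in conversion). -/
inductive Wf {S C : Type} (sp : Spec S) (sig : C → Tm S C) (valid : C → Prop)
    (R : Rule S C → Prop) : List (Tm S C) → Prop
  | nil : Wf sp sig valid R []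
  | cons {Γ A s} : Typing sp sig valid R Γ A (.sort s) → Wf sp sig valid R (A :: Γ)

/-- Typing judgment Γ ⊢ M : A (conversion modulo βR). -/
inductive Typing {S C : Type} (sp : Spec S) (sig : C → Tm S C) (valid : C → Prop)
    (R : Rule S C → Prop) : List (Tm S C) → Tm S C → Tm S C → Prop
  | var {Γ i A} : Wf sp sig valid R Γ → Γ[i]? = some A →
      Typing sp sig valid R Γ (.var i) (A.lift (i+1) 0)
  | const {Γ c} : Wf sp sig valid R Γ → valid c →
      Typing sp sig valid R Γ (.const c) (sig c)
  | sort {Γ s₁ s₂} : Wf sp sig valid R Γ → sp.ax s₁ s₂ →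
      Typing sp sig valid R Γ (.sort s₁) (.sort s₂)
  | pi {Γ A B s₁ s₂ s₃} : Typing sp sig valid R Γ A (.sort s₁) →
      Typing sp sig valid R (A :: Γ) B (.sort s₂) → sp.ru s₁ s₂ s₃ →
      Typing sp sig valid R Γ (.pi A B) (.sort s₃)
  | lam {Γ A M B s} : Typing sp sig valid R (A :: Γ) M B →
      Typing sp sig valid R Γ (.pi A B) (.sort s) →
      Typing sp sig valid R Γ (.lam A M) (.pi A B)
  | app {Γ M N A B} : Typing sp sig valid R Γ M (.pi A B) →
      Typing sp sig valid R Γ N A →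
      Typing sp sig valid R Γ (.app M N) (Tm.subst 0 N B)
  | conv {Γ M A B s} : Typing sp sig valid R Γ M A →
      Typing sp sig valid R Γ B (.sort s) → Conv R A B →
      Typing sp sig valid R Γ M B
end

/-- Typing in a pure type system λS (no constants, no rewriting). -/
abbrev PTyping {S : Type} (sp : Spec S) :
    List (Tm S Empty) → Tm S Empty → Tm S Empty → Prop :=
  Typing sp (fun c => c.elim) (fun _ => False) NoRules

abbrev PWf {S : Type} (sp : Spec S) : List (Tm S Empty) → Prop :=
  Wf sp (fun c => c.elim) (fun _ => False) NoRules

/-- The two sorts of the λΠ-calculus. -/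
inductive LSort : Type
  | ty : LSort
  | kd : LSort

/-- The specification of the λΠ-calculus: Type : Kind, rules (Type,Type,Type),(Type,Kind,Kind). -/
def lpiSpec : Spec LSort where
  sorts := Set.univ
  ax s₁ s₂ := s₁ = .ty ∧ s₂ = .kd
  ru s₁ s₂ s₃ := s₁ = .ty ∧ ((s₂ = .ty ∧ s₃ = .ty) ∨ (s₂ = .kd ∧ s₃ = .kd))

/-- A rewrite rule is well-typed in the signature when both sides have a common type
in the plain λΠ-calculus (no rewriting) over that signature. -/
def RuleWellTyped {C : Type} (sig : C → Tm LSort C) (valid : C → Prop)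
    (ρ : Rule LSort C) : Prop :=
  ∃ A, Typing lpiSpec sig valid NoRules ρ.1 ρ.2.1 A ∧
       Typing lpiSpec sig valid NoRules ρ.1 ρ.2.2 A

/-- Well-formed signature: every constant's type is a λΠ type in the empty context. -/
def SigWellFormed {C : Type} (sig : C → Tm LSort C) (valid : C → Prop) : Prop :=
  ∀ c, valid c → ∃ s, Typing lpiSpec sig valid NoRules [] (sig c) (.sort s)

/-- Constants of the Cousineau–Dowek signature Σ_S. -/
inductive Const (S : Type) : Type
  | u : S → Const S
  | eps : S → Const S
  | dot : S → S → Const S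
  | pidot : S → S → S → Const S

/-- Types of the constants of Σ_S. -/
def sigS {S : Type} : Const S → Tm LSort (Const S)
  | .u _ => .sort .ty
  | .eps s => .pi (.const (.u s)) (.sort .ty)
  | .dot _ s₂ => .const (.u s₂)
  | .pidot s₁ s₂ s₃ =>
      .pi (.const (.u s₁))
        (.pi (.pi (.app (.const (.eps s₁)) (.var 0)) (.const (.u s₂))) (.const (.u s₃)))

/-- Valid constants of Σ_S (u_s, ε_s for sorts; ṡ₁ : u_{s₂} for axioms; π̇ for rules). -/
def validS {S : Type} (sp : Spec S) : Const S → Prop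
  | .u s => s ∈ sp.sorts
  | .eps s => s ∈ sp.sorts
  | .dot s₁ s₂ => sp.ax s₁ s₂
  | .pidot s₁ s₂ s₃ => sp.ru s₁ s₂ s₃

/-- The rewrite system R_S: ε_{s₂} ṡ₁ ↝ u_{s₁} and
ε_{s₃}(π̇_{s₁s₂s₃} A B) ↝ Πx:(ε_{s₁}A). ε_{s₂}(B x). -/
inductive RS {S : Type} (sp : Spec S) : Rule LSort (Const S) → Prop
  | axRule {s₁ s₂} : sp.ax s₁ s₂ →
      RS sp ([], .app (.const (.eps s₂)) (.const (.dot s₁ s₂)), .const (.u s₁))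
  | piRule {s₁ s₂ s₃} : sp.ru s₁ s₂ s₃ →
      RS sp ([.pi (.app (.const (.eps s₁)) (.var 0)) (.const (.u s₂)), .const (.u s₁)],
             .app (.const (.eps s₃)) (.app (.app (.const (.pidot s₁ s₂ s₃)) (.var 1)) (.var 0)),
             .pi (.app (.const (.eps s₁)) (.var 1)) (.app (.const (.eps s₂)) (.app (.var 1) (.var 0))))

/-- Typing in λΠ/S. -/
abbrev LTyping {S : Type} (sp : Spec S) :
    List (Tm LSort (Const S)) → Tm LSort (Const S) → Tm LSort (Const S) → Prop :=
  Typing lpiSpec sigS (validS sp) (RS sp)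

abbrev LWf {S : Type} (sp : Spec S) : List (Tm LSort (Const S)) → Prop :=
  Wf lpiSpec sigS (validS sp) (RS sp)

mutual
/-- Forward translation of terms: |M|_Γ = M'. -/
inductive TrT {S : Type} (sp : Spec S) :
    List (Tm S Empty) → Tm S Empty → Tm LSort (Const S) → Prop
  | sort {Γ s s'} : sp.ax s s' → TrT sp Γ (.sort s) (.const (.dot s s'))
  | var {Γ i} : TrT sp Γ (.var i) (.var i)
  | app {Γ M M' N N'} : TrT sp Γ M M' → TrT sp Γ N N' →
      TrT sp Γ (.app M N) (.app M' N')
  | lam {Γ A A' M M'} : TrTy sp Γ A A' → TrT sp (A :: Γ) M M' →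
      TrT sp Γ (.lam A M) (.lam A' M')
  | pi {Γ A B s₁ s₂ s₃ A' A'' B'} : PTyping sp Γ A (.sort s₁) →
      PTyping sp (A :: Γ) B (.sort s₂) → sp.ru s₁ s₂ s₃ →
      TrT sp Γ A A' → TrTy sp Γ A A'' → TrT sp (A :: Γ) B B' →
      TrT sp Γ (.pi A B) (.app (.app (.const (.pidot s₁ s₂ s₃)) A') (.lam A'' B'))

/-- Forward translation of types: ‖A‖_Γ = A'. -/
inductive TrTy {S : Type} (sp : Spec S) :
    List (Tm S Empty) → Tm S Empty → Tm LSort (Const S) → Prop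
  | sort {Γ s} : TrTy sp Γ (.sort s) (.const (.u s))
  | pi {Γ A A' B B'} : TrTy sp Γ A A' → TrTy sp (A :: Γ) B B' →
      TrTy sp Γ (.pi A B) (.pi A' B')
  | el {Γ A s A'} : PTyping sp Γ A (.sort s) → TrT sp Γ A A' →
      TrTy sp Γ A (.app (.const (.eps s)) A')
end

/-- Forward translation of contexts ‖Γ‖. -/
inductive TrCtx {S : Type} (sp : Spec S) :
    List (Tm S Empty) → List (Tm LSort (Const S)) → Prop
  | nil : TrCtx sp [] []
  | cons {Γ Γ' A A'} : TrCtx sp Γ Γ' → TrTy sp Γ A A' → TrCtx sp (A :: Γ) (A' :: Γ')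

mutual
/-- Inverse translation of terms: φ(M) = M'. -/
inductive InvT {S : Type} : Tm LSort (Const S) → Tm S Empty → Prop
  | dot {s₁ s₂} : InvT (.const (.dot s₁ s₂)) (.sort s₁)
  | pidot {s₁ s₂ s₃} : InvT (.const (.pidot s₁ s₂ s₃))
      (.lam (.sort s₁) (.lam (.pi (.var 0) (.sort s₂))
        (.pi (.var 1) (.app (.var 1) (.var 0)))))
  | var {i} : InvT (.var i) (.var i)
  | app {M M' N N'} : InvT M M' → InvT N N' → InvT (.app M N) (.app M' N')
  | lam {A A' M M'} : InvTy A A' → InvT M M' → InvT (.lam A M) (.lam A' M')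

/-- Inverse translation of types: ψ(A) = A'. -/
inductive InvTy {S : Type} : Tm LSort (Const S) → Tm S Empty → Prop
  | u {s} : InvTy (.const (.u s)) (.sort s)
  | el {s M M'} : InvT M M' → InvTy (.app (.const (.eps s)) M) M'
  | pi {A A' B B'} : InvTy A A' → InvTy B B' → InvTy (.pi A B) (.pi A' B')
end

/-- Inverse translation of (object) contexts ψ(Γ). -/
inductive InvCtx {S : Type} : List (Tm LSort (Const S)) → List (Tm S Empty) → Prop
  | nil : InvCtx [] []
  | cons {Γ Γ' A A'} : InvCtx Γ Γ' → InvTy A A' → InvCtx (A :: Γ) (A' :: Γ')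

/-- The minimal completion S* of S: a fresh top-sort τ, axioms s:τ for the top-sorts
of S, and rules (s₁,s₂,τ) for all pairs having no rule. -/
def mc {S : Type} (sp : Spec S) (τ : S) : Spec S where
  sorts := insert τ sp.sorts
  ax s₁ s₂ := sp.ax s₁ s₂ ∨ (s₁ ∈ sp.sorts ∧ (¬ ∃ s, sp.ax s₁ s) ∧ s₂ = τ)
  ru s₁ s₂ s₃ := sp.ru s₁ s₂ s₃ ∨
      (s₁ ∈ insert τ sp.sorts ∧ s₂ ∈ insert τ sp.sorts ∧ (¬ ∃ s, sp.ru s₁ s₂ s) ∧ s₃ = τ)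

/-- S' is a completion of S. -/
def IsCompletion {S : Type} (sp sp' : Spec S) : Prop :=
  sp.sorts ⊆ sp'.sorts ∧
  (∀ s₁ s₂, sp.ax s₁ s₂ → sp'.ax s₁ s₂) ∧
  (∀ s₁ s₂ s₃, sp.ru s₁ s₂ s₃ → sp'.ru s₁ s₂ s₃) ∧
  (∀ s₁ ∈ sp.sorts, ∃ s₂, sp'.ax s₁ s₂) ∧
  (∀ s₁ ∈ sp'.sorts, ∀ s₂ ∈ sp'.sorts, ∃ s₃, sp'.ru s₁ s₂ s₃)

/-- Kind-level β-reduction in a λΠ-calculus modulo: contraction of a β-redex whose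
type has type Kind, under any context. -/
inductive KindStep {C : Type} (sig : C → Tm LSort C) (valid : C → Prop)
    (R : Rule LSort C → Prop) : List (Tm LSort C) → Tm LSort C → Tm LSort C → Prop
  | beta {Γ A M N T} :
      Typing lpiSpec sig valid R Γ (.app (.lam A M) N) T →
      Typing lpiSpec sig valid R Γ T (.sort .kd) →
      KindStep sig valid R Γ (.app (.lam A M) N) (Tm.subst 0 N M)
  | appL {Γ M M' N} : KindStep sig valid R Γ M M' →
      KindStep sig valid R Γ (.app M N) (.app M' N)
  | appR {Γ M N N'} : KindStep sig valid R Γ N N' →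
      KindStep sig valid R Γ (.app M N) (.app M N')
  | lamA {Γ A A' M} : KindStep sig valid R Γ A A' →
      KindStep sig valid R Γ (.lam A M) (.lam A' M)
  | lamM {Γ A M M'} : KindStep sig valid R (A :: Γ) M M' →
      KindStep sig valid R Γ (.lam A M) (.lam A M')
  | piA {Γ A A' B} : KindStep sig valid R Γ A A' →
      KindStep sig valid R Γ (.pi A B) (.pi A' B)
  | piB {Γ A B B'} : KindStep sig valid R (A :: Γ) B B' →
      KindStep sig valid R Γ (.pi A B) (.pi A B')

/-- A term with no Kind-level β-redexes (a λΠ⁻ term). -/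
def KindFree {C : Type} (sig : C → Tm LSort C) (valid : C → Prop)
    (R : Rule LSort C → Prop) (Γ : List (Tm LSort C)) (M : Tm LSort C) : Prop :=
  ∀ N, ¬ KindStep sig valid R Γ M N

/-- Object contexts of λΠ/S: every declared type has type Type. -/
def ObjCtx {S : Type} (sp : Spec S) (Γ : List (Tm LSort (Const S))) : Prop :=
  ∀ i A, Γ[i]? = some A → LTyping sp (Γ.drop (i+1)) A (.sort .ty)

/-- The τ-height measure ℋ_τ on Γ-types of λS*. -/
inductive Ht {S : Type} (sp : Spec S) (τ : S) :
    List (Tm S Empty) → Tm S Empty → Nat → Prop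
  | ntau {Γ A s} : PTyping (mc sp τ) Γ A (.sort s) → s ≠ τ → Ht sp τ Γ A 0
  | srt {Γ s'} : PTyping (mc sp τ) Γ (.sort s') (.sort τ) → Ht sp τ Γ (.sort s') 0
  | pi {Γ B C m n} : PTyping (mc sp τ) Γ (.pi B C) (.sort τ) →
      Ht sp τ Γ B m → Ht sp τ (B :: Γ) C n → Ht sp τ Γ (.pi B C) (max m n + 1)

/-- The reducibility predicate, stratified by the τ-height of the type. -/
def RedN {S : Type} (sp : Spec S) (τ : S) :
    Nat → List (Tm S Empty) → Tm S Empty → Tm S Empty → Prop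
  | n, Γ, M, A =>
    PWf sp Γ ∧ ∃ s, PTyping (mc sp τ) Γ M A ∧ PTyping (mc sp τ) Γ A (.sort s) ∧
      ((s ≠ τ ∨ ∃ s' ∈ sp.sorts, A = .sort s') →
        ∃ M' A', BetaRed M M' ∧ BetaRed A A' ∧ PTyping sp Γ M' A') ∧
      (s = τ → ∀ B C, A = .pi B C → ∀ N,
        (∀ m (hm : m < n), Ht sp τ Γ B m → RedN sp τ m Γ N B) →
        ∀ m (hm : m < n), Ht sp τ Γ (Tm.subst 0 N C) m →
          RedN sp τ m Γ (.app M N) (Tm.subst 0 N C))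
  termination_by n => n

/-- The reducibility predicate Γ ⊨_S M : A. -/
def Reducible {S : Type} (sp : Spec S) (τ : S)
    (Γ : List (Tm S Empty)) (M A : Tm S Empty) : Prop :=
  ∃ n, Ht sp τ Γ A n ∧ RedN sp τ n Γ M A



/-!
Induction on `M`. The generation lemma says that any type of `M` is convertible to the type
assigned by the typing rule of its head constructor, so it suffices to see that this type is
unique up to conversion given the induction hypotheses. For sorts and products this is
functionality of the axioms and rules, once conversion is known to be injective on sorts and on
Π-types; that injectivity is the Church–Rosser property of β, proved with Takahashi's parallel
reduction and complete development.
-/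

theorem Relation.EqvGen.lift' {α β : Type*} {r : α → α → Prop} {p : β → β → Prop}
    (f : α → β) (h : ∀ a b, r a b → EqvGen p (f a) (f b)) {a b : α} (hab : EqvGen r a b) :
    EqvGen p (f a) (f b) := by
  induction hab with
  | rel a b hab => exact h a b hab
  | refl a => exact .refl _
  | symm a b _ ih => exact .symm _ _ ih
  | trans a b c _ _ ih₁ ih₂ => exact .trans _ _ _ ih₁ ih₂

section Conversion
open Relation
variable {S C : Type} {R : Rule S C → Prop}

theorem Red.app {M M' N N' : Tm S C} (hM : Red R M M') (hN : Red R N N') :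
    Red R (.app M N) (.app M' N') :=
  (hM.lift (Tm.app · N) fun _ _ h => .appL h).trans
    (hN.lift (Tm.app M' ·) fun _ _ h => .appR h)

theorem Red.lam {A A' M M' : Tm S C} (hA : Red R A A') (hM : Red R M M') :
    Red R (.lam A M) (.lam A' M') :=
  (hA.lift (Tm.lam · M) fun _ _ h => .lamA h).trans
    (hM.lift (Tm.lam A' ·) fun _ _ h => .lamM h)

theorem Red.pi {A A' B B' : Tm S C} (hA : Red R A A') (hB : Red R B B') :
    Red R (.pi A B) (.pi A' B') :=
  (hA.lift (Tm.pi · B) fun _ _ h => .piA h).trans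
    (hB.lift (Tm.pi A' ·) fun _ _ h => .piB h)

theorem Conv.pi_right {A B B' : Tm S C} (h : Conv R B B') : Conv R (.pi A B) (.pi A B') :=
  EqvGen.lift' (Tm.pi A) (fun _ _ h => .rel _ _ (Step.piB h)) h

theorem Red.conv {M N : Tm S C} (h : Red R M N) : Conv R M N :=
  EqvGen.reflTransGen_le_eqvGen _ _ _ h

theorem conv_of_red_of_red {M N P : Tm S C} (hM : Red R M P) (hN : Red R N P) : Conv R M N :=
  (Red.conv hM).trans _ _ _ ((Red.conv hN).symm _ _)

theorem conv_of_conv_of_conv {P P' A B : Tm S C} (hP : Conv R P P') (hA : Conv R P A)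
    (hB : Conv R P' B) : Conv R A B :=
  (hA.symm _ _).trans _ _ _ (hP.trans _ _ _ hB)

end Conversion

namespace Tm
open Relation
variable {S C : Type}

theorem lift_lift_comm (M : Tm S C) {d m i k : Nat} (hk : k ≤ i) :
    (M.lift m i).lift d k = (M.lift d k).lift m (i + d) := by
  induction M generalizing i k <;> grind [lift]

theorem lift_lift_of_le (M : Tm S C) {d m i k : Nat} (h₁ : i ≤ k) (h₂ : k ≤ i + m) :
    (M.lift m i).lift d k = M.lift (m + d) i := by
  induction M generalizing i k <;> grind [lift]

theorem lift_subst (M N : Tm S C) {d j k : Nat} (h : j ≤ k) :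
    (subst j N M).lift d k = subst j (N.lift d (k - j)) (M.lift d (k + 1)) := by
  induction M generalizing j k with
  | var i => grind [lift, subst, lift_lift_comm]
  | _ => grind [lift, subst]

theorem subst_lift (M N : Tm S C) {d i k : Nat} (h : i ≤ k) :
    subst (k + d) N (M.lift d i) = (subst k N M).lift d i := by
  induction M generalizing i k with
  | var j => grind [lift, subst, lift_lift_of_le]
  | _ => grind [lift, subst]

theorem subst_lift_succ (M N : Tm S C) {d i k : Nat} (h₁ : i ≤ k) (h₂ : k ≤ i + d) :
    subst k N (M.lift (d + 1) i) = M.lift d i := by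
  induction M generalizing i k <;> grind [lift, subst]

theorem subst_subst (M N P : Tm S C) {j k : Nat} (h : j ≤ k) :
    subst k N (subst j P M) = subst j (subst (k - j) N P) (subst (k + 1) N M) := by
  induction M generalizing j k with
  | var i =>
    have hP := subst_lift P N (d := j) (Nat.zero_le (k - j))
    rw [Nat.sub_add_cancel h] at hP
    grind [subst, subst_lift_succ]
  | _ => grind [subst]

inductive Par : Tm S C → Tm S C → Prop
  | sort (s) : Par (.sort s) (.sort s)
  | const (c) : Par (.const c) (.const c)
  | var (i) : Par (.var i) (.var i)
  | app {M M' N N'} : Par M M' → Par N N' → Par (.app M N) (.app M' N')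
  | lam {A A' M M'} : Par A A' → Par M M' → Par (.lam A M) (.lam A' M')
  | pi {A A' B B'} : Par A A' → Par B B' → Par (.pi A B) (.pi A' B')
  | beta {A M M' N N'} : Par M M' → Par N N' → Par (.app (.lam A M) N) (subst 0 N' M')

theorem Par.refl (M : Tm S C) : Par M M := by
  induction M with
  | sort s => exact .sort s
  | const c => exact .const c
  | var i => exact .var i
  | app _ _ ihM ihN => exact .app ihM ihN
  | lam _ _ ihA ihM => exact .lam ihA ihM
  | pi _ _ ihA ihB => exact .pi ihA ihB

theorem Par.lift {M M' : Tm S C} (h : Par M M') (d k : Nat) :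
    Par (M.lift d k) (M'.lift d k) := by
  induction h generalizing k with
  | beta _ _ ihM ihN =>
    rw [lift_subst _ _ (Nat.zero_le k)]
    exact .beta (ihM (k + 1)) (ihN k)
  | app _ _ ihM ihN => exact .app (ihM k) (ihN k)
  | lam _ _ ihA ihM => exact .lam (ihA k) (ihM (k + 1))
  | pi _ _ ihA ihB => exact .pi (ihA k) (ihB (k + 1))
  | _ => exact .refl _

theorem Par.subst {N N' M M' : Tm S C} (hN : Par N N') (hM : Par M M') (k : Nat) :
    Par (subst k N M) (subst k N' M') := by
  induction hM generalizing k with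
  | var i =>
    simp only [Tm.subst]
    split_ifs
    exacts [.var i, hN.lift k 0, .var (i - 1)]
  | beta _ _ ihM ihN =>
    rw [subst_subst _ _ _ (Nat.zero_le k)]
    exact .beta (ihM (k + 1)) (ihN k)
  | app _ _ ihM ihN => exact .app (ihM k) (ihN k)
  | lam _ _ ihA ihM => exact .lam (ihA k) (ihM (k + 1))
  | pi _ _ ihA ihB => exact .pi (ihA k) (ihB (k + 1))
  | _ => exact .refl _

/-- Takahashi's complete development. -/
def cd : Tm S C → Tm S C
  | .app (.lam _ M) N => subst 0 (cd N) (cd M)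
  | .app M N => .app (cd M) (cd N)
  | .lam A M => .lam (cd A) (cd M)
  | .pi A B => .pi (cd A) (cd B)
  | t => t

theorem Par.triangle {M N : Tm S C} (h : Par M N) : Par N (cd M) := by
  induction h with
  | app hM _ ihM ihN =>
    cases hM with
    | lam _ _ => cases ihM with
      | lam _ ihM' => exact .beta ihM' ihN
    | _ => exact .app ihM ihN
  | lam _ _ ihA ihM => exact .lam ihA ihM
  | pi _ _ ihA ihB => exact .pi ihA ihB
  | beta _ _ ihM ihN => exact ihN.subst ihM 0
  | _ => exact .refl _

theorem Par.of_step {M N : Tm S C} (h : Step NoRules M N) : Par M N := by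
  induction h with
  | beta => exact .beta (.refl _) (.refl _)
  | rew _ hr => exact hr.elim
  | appL _ ih => exact .app ih (.refl _)
  | appR _ ih => exact .app (.refl _) ih
  | lamA _ ih => exact .lam ih (.refl _)
  | lamM _ ih => exact .lam (.refl _) ih
  | piA _ ih => exact .pi ih (.refl _)
  | piB _ ih => exact .pi (.refl _) ih

theorem Par.betaRed {M N : Tm S C} (h : Par M N) : BetaRed M N := by
  induction h with
  | app _ _ ihM ihN => exact Red.app ihM ihN
  | lam _ _ ihA ihM => exact Red.lam ihA ihM
  | pi _ _ ihA ihB => exact Red.pi ihA ihB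
  | beta _ _ ihM ihN => exact (Red.app (Red.lam .refl ihM) ihN).tail .beta
  | _ => exact .refl

theorem reflTransGen_par : ReflTransGen (@Par S C) = BetaRed :=
  le_antisymm (reflTransGen_le_of_le fun _ _ => Par.betaRed)
    (ReflTransGen.mono fun _ _ => Par.of_step)

end Tm

section Confluence
open Relation Tm
variable {S C : Type}

theorem BetaConv.join {M N : Tm S C} (h : BetaConv M N) : Join BetaRed M N := by
  have hequiv : Equivalence (Join (ReflTransGen (@Par S C))) :=
    equivalence_join_reflTransGen fun a _ _ hb hc =>
      ⟨cd a, .single hb.triangle, .single hc.triangle⟩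
  rw [← reflTransGen_par]
  exact hequiv.eqvGen_iff.1
    (EqvGen.mono (fun _ b h => ⟨b, .single (Par.of_step h), .refl⟩) _ _ h)

theorem BetaConv.subst {M M' : Tm S C} (h : BetaConv M M') (k : Nat) (N : Tm S C) :
    BetaConv (subst k N M) (subst k N M') :=
  EqvGen.lift' (Tm.subst k N) (fun _ _ h =>
    Red.conv ((Par.refl N).subst (Par.of_step h) k).betaRed) h

theorem BetaRed.eq_sort {s : S} {M : Tm S C} (h : BetaRed (.sort s) M) : M = .sort s := by
  rw [← reflTransGen_par] at h
  induction h with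
  | refl => rfl
  | tail _ hpar ih => subst ih; cases hpar; rfl

theorem BetaRed.eq_pi {A B M : Tm S C} (h : BetaRed (.pi A B) M) :
    ∃ A' B', M = .pi A' B' ∧ BetaRed A A' ∧ BetaRed B B' := by
  rw [← reflTransGen_par] at h
  induction h with
  | refl => exact ⟨A, B, rfl, .refl, .refl⟩
  | tail _ hpar ih =>
    obtain ⟨A', B', rfl, hA, hB⟩ := ih
    cases hpar with
    | pi hA' hB' => exact ⟨_, _, rfl, hA.trans hA'.betaRed, hB.trans hB'.betaRed⟩

theorem BetaConv.sort_inj {s s' : S} (h : BetaConv (sort s) (sort s' : Tm S C)) : s = s' := by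
  obtain ⟨M, hM, hM'⟩ := BetaConv.join h
  cases (BetaRed.eq_sort hM).symm.trans (BetaRed.eq_sort hM')
  rfl

theorem BetaConv.pi_inj {A B A' B' : Tm S C} (h : BetaConv (pi A B) (pi A' B')) :
    BetaConv A A' ∧ BetaConv B B' := by
  obtain ⟨M, hM, hM'⟩ := BetaConv.join h
  obtain ⟨_, _, rfl, hA, hB⟩ := BetaRed.eq_pi hM
  obtain ⟨_, _, he, hA', hB'⟩ := BetaRed.eq_pi hM'
  cases he
  exact ⟨conv_of_red_of_red hA hA', conv_of_red_of_red hB hB'⟩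

end Confluence

section Generation
variable {S C : Type} {sp : Spec S} {sig : C → Tm S C} {valid : C → Prop}
  {R : Rule S C → Prop}

def Generation (sp : Spec S) (sig : C → Tm S C) (valid : C → Prop) (R : Rule S C → Prop)
    (Γ : List (Tm S C)) : Tm S C → Tm S C → Prop
  | .var i, T => ∃ A, Γ[i]? = some A ∧ Conv R (A.lift (i + 1) 0) T
  | .const c, T => valid c ∧ Conv R (sig c) T
  | .sort s₁, T => ∃ s₂, sp.ax s₁ s₂ ∧ Conv R (.sort s₂) T
  | .pi A B, T => ∃ s₁ s₂ s₃, Typing sp sig valid R Γ A (.sort s₁) ∧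
      Typing sp sig valid R (A :: Γ) B (.sort s₂) ∧ sp.ru s₁ s₂ s₃ ∧
      Conv R (.sort s₃) T
  | .lam A M, T => ∃ B s, Typing sp sig valid R (A :: Γ) M B ∧
      Typing sp sig valid R Γ (.pi A B) (.sort s) ∧ Conv R (.pi A B) T
  | .app M N, T => ∃ A B, Typing sp sig valid R Γ M (.pi A B) ∧
      Typing sp sig valid R Γ N A ∧ Conv R (Tm.subst 0 N B) T

theorem Generation.conv {Γ : List (Tm S C)} {M T T' : Tm S C}
    (h : Generation sp sig valid R Γ M T) (hT : Conv R T T') :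
    Generation sp sig valid R Γ M T' := by
  have toT' {P : Tm S C} (hP : Conv R P T) : Conv R P T' := hP.trans _ _ _ hT
  cases M with
  | var => obtain ⟨A, hΓ, hA⟩ := h; exact ⟨A, hΓ, toT' hA⟩
  | const => obtain ⟨hc, hA⟩ := h; exact ⟨hc, toT' hA⟩
  | sort => obtain ⟨s₂, hax, hA⟩ := h; exact ⟨s₂, hax, toT' hA⟩
  | pi =>
    obtain ⟨s₁, s₂, s₃, hA, hB, hru, hP⟩ := h
    exact ⟨s₁, s₂, s₃, hA, hB, hru, toT' hP⟩
  | lam => obtain ⟨B, s, hM, hP, hPT⟩ := h; exact ⟨B, s, hM, hP, toT' hPT⟩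
  | app => obtain ⟨A, B, hM, hN, hP⟩ := h; exact ⟨A, B, hM, hN, toT' hP⟩

theorem Typing.generation {Γ : List (Tm S C)} {M T : Tm S C}
    (h : Typing sp sig valid R Γ M T) : Generation sp sig valid R Γ M T := by
  induction h using Typing.rec (motive_1 := fun _ _ => True) with
  | var _ hΓ => exact ⟨_, hΓ, .refl _⟩
  | const _ hc => exact ⟨hc, .refl _⟩
  | sort _ hax => exact ⟨_, hax, .refl _⟩
  | pi hA hB hru => exact ⟨_, _, _, hA, hB, hru, .refl _⟩
  | lam hM hP => exact ⟨_, _, hM, hP, .refl _⟩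
  | app hM hN => exact ⟨_, _, hM, hN, .refl _⟩
  | conv _ _ hAB ih => exact ih.conv hAB
  | nil | cons => trivial

theorem Typing.type_unique_of_functional (hfun : sp.Functional)
    {Γ : List (Tm S C)} {M A B : Tm S C}
    (hA : Typing sp sig valid NoRules Γ M A) (hB : Typing sp sig valid NoRules Γ M B) :
    BetaConv A B := by
  induction M generalizing Γ A B with
  | var =>
    obtain ⟨_, hΓ, hA⟩ := hA.generation
    obtain ⟨_, hΓ', hB⟩ := hB.generation
    cases hΓ.symm.trans hΓ'
    exact conv_of_conv_of_conv (.refl _) hA hB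
  | const =>
    exact conv_of_conv_of_conv (.refl _) hA.generation.2 hB.generation.2
  | sort =>
    obtain ⟨_, hax, hA⟩ := hA.generation
    obtain ⟨_, hax', hB⟩ := hB.generation
    cases hfun.1 _ _ _ hax hax'
    exact conv_of_conv_of_conv (.refl _) hA hB
  | pi _ _ ihA ihB =>
    obtain ⟨_, _, _, hA₁, hB₁, hru, hA⟩ := hA.generation
    obtain ⟨_, _, _, hA₁', hB₁', hru', hB⟩ := hB.generation
    cases BetaConv.sort_inj (ihA hA₁ hA₁')
    cases BetaConv.sort_inj (ihB hB₁ hB₁')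
    cases hfun.2 _ _ _ _ hru hru'
    exact conv_of_conv_of_conv (.refl _) hA hB
  | lam _ _ _ ihM =>
    obtain ⟨_, _, hM, _, hA⟩ := hA.generation
    obtain ⟨_, _, hM', _, hB⟩ := hB.generation
    exact conv_of_conv_of_conv (Conv.pi_right (ihM hM hM')) hA hB
  | app _ N ihM _ =>
    obtain ⟨_, _, hM, _, hA⟩ := hA.generation
    obtain ⟨_, _, hM', _, hB⟩ := hB.generation
    exact conv_of_conv_of_conv (BetaConv.subst (BetaConv.pi_inj (ihM hM hM')).2 0 N) hA hB

end Generation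

/-- uniqueness of types in a functional PTS. -/
theorem uniqueness_of_types {S : Type} (sp : Spec S) (hfun : sp.Functional)
    {Γ : List (Tm S Empty)} {M A B : Tm S Empty}
    (hA : PTyping sp Γ M A) (hB : PTyping sp Γ M B) : BetaConv A B :=
  Typing.type_unique_of_functional hfun hA hB
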